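/- If A is an R0-tensor, then for every a ∈ ℝ^n with Sol(A,a) ≠ ∅, the map Sol_A : ℝ^n ⇉ ℝ^n, b ↦ Sol(A,b), is upper semicontinuous at a: for every open set V ⊆ ℝ^n with Sol(A,a) ⊆ V, there exists an open neighborhood W of a in ℝ^n such that Sol(A,b) ⊆ V for all b ∈ W. -/
import Mathlib


open Finset MeasureTheory Pointwise

/-- For a tensor `A` of order `k+1` and dimension `n` (entries `A i j` = `a_{i, j 0, …, j (k-1)}`),
`tApply A x` is the vector `A x^{k}` with `i`-th component
`∑_{i_2,…,i_{k+1}} a_{i i_2 ⋯ i_{k+1}} x_{i_2} ⋯ x_{i_{k+1}}`. -/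
noncomputable def tApply {n k : ℕ} (A : Fin n → (Fin k → Fin n) → ℝ) (x : Fin n → ℝ) :
    Fin n → ℝ :=
  fun i => ∑ j : Fin k → Fin n, A i j * ∏ l : Fin k, x (j l)

/-- The solution set of the tensor complementarity problem `TCP(A,a)`. -/
def Sol {n k : ℕ} (A : Fin n → (Fin k → Fin n) → ℝ) (a : Fin n → ℝ) : Set (Fin n → ℝ) :=
  {x | (∀ i, 0 ≤ x i) ∧ (∀ i, 0 ≤ tApply A x i + a i) ∧ ∑ i, x i * (tApply A x i + a i) = 0}

/-- `A` is an R₀-tensor if `Sol(A,0) = {0}`. -/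
def IsR0 {n k : ℕ} (A : Fin n → (Fin k → Fin n) → ℝ) : Prop := Sol A 0 = {0}

/-- Frobenius norm of a tensor. -/
noncomputable def tNorm {n k : ℕ} (A : Fin n → (Fin k → Fin n) → ℝ) : ℝ :=
  Real.sqrt (∑ i, ∑ j, (A i j) ^ 2)

/-- Euclidean norm of a vector in ℝⁿ. -/
noncomputable def eNorm {n : ℕ} (x : Fin n → ℝ) : ℝ := Real.sqrt (∑ i, (x i) ^ 2)

section aux
open Filter

lemma tApply_continuous {n k : ℕ} (A : Fin n → (Fin k → Fin n) → ℝ) :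
    Continuous (tApply A) := by
  unfold tApply
  exact continuous_pi fun i => continuous_finset_sum _ fun j _ =>
    continuous_const.mul (continuous_finset_prod _ fun l _ => continuous_apply _)

lemma tApply_smul {n k : ℕ} (A : Fin n → (Fin k → Fin n) → ℝ) (c : ℝ) (x : Fin n → ℝ) :
    tApply A (c • x) = c ^ k • tApply A x := by
  funext i
  simp only [tApply, Pi.smul_apply, smul_eq_mul, Finset.mul_sum]
  refine Finset.sum_congr rfl fun j _ => ?_
  rw [Finset.prod_mul_distrib, Finset.prod_const]
  simp only [Finset.card_univ, Fintype.card_fin]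
  ring

lemma sol_smul {n k : ℕ} (A : Fin n → (Fin k → Fin n) → ℝ) {b x : Fin n → ℝ}
    (hx : x ∈ Sol A b) {s : ℝ} (hs : 0 ≤ s) : s • x ∈ Sol A (s ^ k • b) := by
  obtain ⟨h1, h2, h3⟩ := hx
  refine ⟨fun i => by simpa using mul_nonneg hs (h1 i), fun i => ?_, ?_⟩
  · rw [tApply_smul]
    simp only [Pi.smul_apply, smul_eq_mul]
    have := mul_nonneg (pow_nonneg hs k) (h2 i)
    nlinarith
  · rw [tApply_smul]
    simp only [Pi.smul_apply, smul_eq_mul]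
    have : ∑ i, s * x i * (s ^ k * tApply A x i + s ^ k * b i)
        = s ^ (k + 1) * ∑ i, x i * (tApply A x i + b i) := by
      rw [Finset.mul_sum]
      refine Finset.sum_congr rfl fun i _ => by ring
    rw [this, h3, mul_zero]

lemma sol_limit {n k : ℕ} (A : Fin n → (Fin k → Fin n) → ℝ) {b x : ℕ → Fin n → ℝ}
    {b₀ x₀ : Fin n → ℝ} (hb : Tendsto b atTop (nhds b₀)) (hx : Tendsto x atTop (nhds x₀))
    (hsol : ∀ j, x j ∈ Sol A (b j)) : x₀ ∈ Sol A b₀ := by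
  have hxi : ∀ i, Tendsto (fun j => x j i) atTop (nhds (x₀ i)) :=
    fun i => ((continuous_apply i).tendsto x₀).comp hx
  have htAx : Tendsto (fun j => tApply A (x j)) atTop (nhds (tApply A x₀)) :=
    ((tApply_continuous A).tendsto x₀).comp hx
  have htA : ∀ i, Tendsto (fun j => tApply A (x j) i + b j i) atTop
      (nhds (tApply A x₀ i + b₀ i)) :=
    fun i => (((continuous_apply i).tendsto _).comp htAx).add
      (((continuous_apply i).tendsto _).comp hb)
  refine ⟨fun i => ge_of_tendsto' (hxi i) fun j => (hsol j).1 i,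
    fun i => ge_of_tendsto' (htA i) fun j => (hsol j).2.1 i, ?_⟩
  have hsum : Tendsto (fun j => ∑ i, x j i * (tApply A (x j) i + b j i)) atTop
      (nhds (∑ i, x₀ i * (tApply A x₀ i + b₀ i))) :=
    tendsto_finset_sum _ fun i _ => (hxi i).mul (htA i)
  have heq : (fun j => ∑ i, x j i * (tApply A (x j) i + b j i)) = fun _ => (0:ℝ) :=
    funext fun j => (hsol j).2.2
  rw [heq] at hsum
  exact tendsto_nhds_unique hsum tendsto_const_nhds

end aux

/-- if `A` is R₀, then the map `Sol_A : b ↦ Sol(A,b)` is upper semicontinuous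
at every `a` with `Sol(A,a) ≠ ∅`. -/
theorem stmt_11 (m n : ℕ) (hm : 2 ≤ m) (hn : 2 ≤ n) (A : Fin n → (Fin (m - 1) → Fin n) → ℝ) (hA : IsR0 A)
    (a : Fin n → ℝ) (hne : (Sol A a).Nonempty) :
    ∀ V' : Set (Fin n → ℝ), IsOpen V' → Sol A a ⊆ V' →
      ∃ W : Set (Fin n → ℝ), IsOpen W ∧ a ∈ W ∧ ∀ b ∈ W, Sol A b ⊆ V' := by
  intro V' hV hVsub
  by_contra h
  push_neg at h
  have key : ∀ j : ℕ, ∃ b, dist b a < 1/(j+1) ∧ ∃ x ∈ Sol A b, x ∉ V' := by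
    intro j
    obtain ⟨b, hbW, hnsub⟩ := h (Metric.ball a (1/(j+1))) Metric.isOpen_ball
      (Metric.mem_ball_self (by positivity))
    obtain ⟨x, hx, hxV⟩ := Set.not_subset.mp hnsub
    exact ⟨b, Metric.mem_ball.mp hbW, x, hx, hxV⟩
  choose b hbd x hxsol hxV using key
  have hbtend : Filter.Tendsto b Filter.atTop (nhds a) := by
    rw [tendsto_iff_dist_tendsto_zero]
    refine squeeze_zero (fun j => dist_nonneg) (fun j => (hbd j).le) ?_
    exact tendsto_one_div_add_atTop_nhds_zero_nat
  have hbbd : ∀ j, ‖b j‖ ≤ ‖a‖ + 1 := by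
    intro j
    have h1 : dist (b j) a ≤ 1 := by
      refine (hbd j).le.trans ?_
      rw [div_le_one (by positivity)]
      linarith [Nat.cast_nonneg (α := ℝ) j]
    calc ‖b j‖ = ‖(b j - a) + a‖ := by ring_nf
      _ ≤ ‖b j - a‖ + ‖a‖ := norm_add_le _ _
      _ ≤ ‖a‖ + 1 := by rw [← dist_eq_norm] at *; linarith
  by_cases hbound : ∃ R, ∀ j, ‖x j‖ ≤ R
  · obtain ⟨R, hR⟩ := hbound
    have hmem : ∀ j, x j ∈ Metric.closedBall (0 : Fin n → ℝ) R :=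
      fun j => mem_closedBall_zero_iff.mpr (hR j)
    obtain ⟨x₀, _, φ, hφ, hxt⟩ :=
      (isCompact_closedBall (0 : Fin n → ℝ) R).tendsto_subseq hmem
    have hx₀sol : x₀ ∈ Sol A a :=
      sol_limit A (hbtend.comp hφ.tendsto_atTop) hxt (fun j => hxsol (φ j))
    obtain ⟨j, hj⟩ := (hxt.eventually (hV.mem_nhds (hVsub hx₀sol))).exists
    exact hxV (φ j) hj
  · push_neg at hbound
    choose ψ hψ using fun k : ℕ => hbound k
    set t : ℕ → ℝ := fun k => ‖x (ψ k)‖ with ht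
    have ht0 : ∀ k, 0 < t k := fun k => lt_of_le_of_lt (Nat.cast_nonneg k) (hψ k)
    set s : ℕ → ℝ := fun k => (t k)⁻¹ with hs
    have hs0 : ∀ k, 0 ≤ s k := fun k => inv_nonneg.mpr (ht0 k).le
    set y : ℕ → Fin n → ℝ := fun k => s k • x (ψ k) with hy
    set c : ℕ → Fin n → ℝ := fun k => (s k) ^ (m-1) • b (ψ k) with hc
    have hysol : ∀ k, y k ∈ Sol A (c k) := fun k => sol_smul A (hxsol (ψ k)) (hs0 k)
    have hynorm : ∀ k, ‖y k‖ = 1 := by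
      intro k
      rw [hy]
      simp only [norm_smul, Real.norm_eq_abs, abs_of_nonneg (hs0 k)]
      exact inv_mul_cancel₀ (ht0 k).ne'
    have hc0 : Filter.Tendsto c Filter.atTop (nhds 0) := by
      rw [tendsto_zero_iff_norm_tendsto_zero]
      refine squeeze_zero' (g := fun k : ℕ => (‖a‖ + 1) * (1/(k:ℝ))) (Filter.Eventually.of_forall fun k => norm_nonneg _) ?_ ?_
      · filter_upwards [Filter.eventually_ge_atTop 1] with k hk
        have hk1 : (1:ℝ) ≤ (k:ℝ) := by exact_mod_cast hk
        have htk : (k:ℝ) < t k := hψ k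
        have hsk : s k ≤ 1 / k := by
          rw [hs, one_div]
          exact inv_anti₀ (by linarith) htk.le
        have hs1 : s k ≤ 1 := hsk.trans (by rw [div_le_one (by linarith)]; exact hk1)
        have hpow : (s k) ^ (m-1) ≤ s k :=
          pow_le_of_le_one (hs0 k) hs1 (by omega)
        calc ‖c k‖ = (s k) ^ (m-1) * ‖b (ψ k)‖ := by
              rw [hc]; simp only [norm_smul, Real.norm_eq_abs, abs_pow, abs_of_nonneg (hs0 k)]
          _ ≤ (1/k) * (‖a‖ + 1) := by
              refine mul_le_mul (hpow.trans hsk) (hbbd (ψ k)) (norm_nonneg _) (by positivity)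
          _ = (‖a‖ + 1) * (1/k) := by ring
      · have := tendsto_one_div_atTop_nhds_zero_nat.const_mul (‖a‖ + 1)
        simpa using this
    have hymem : ∀ k, y k ∈ Metric.sphere (0 : Fin n → ℝ) 1 :=
      fun k => mem_sphere_zero_iff_norm.mpr (hynorm k)
    obtain ⟨y₀, hy₀mem, φ, hφ, hyt⟩ := (isCompact_sphere (0 : Fin n → ℝ) 1).tendsto_subseq hymem
    have hy₀sol : y₀ ∈ Sol A 0 :=
      sol_limit A (hc0.comp hφ.tendsto_atTop) hyt (fun k => hysol (φ k))
    rw [hA] at hy₀sol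
    have : ‖y₀‖ = 1 := mem_sphere_zero_iff_norm.mp hy₀mem
    rw [Set.mem_singleton_iff.mp hy₀sol] at this
    simp at this
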